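/- Let N ≥ 1, 1 ≤ S ≤ N, o ∈ ℝ^N, and let O := Σ_{k=1}^N o_k Z_k, where Z_k is the N-qubit Pauli operator acting as Z on qubit k and as identity on all other qubits. Let Q be a nonempty finite collection of subsets of {1,…,N}, each of size S. For a subset s ⊆ {1,…,N} and a function h: s → {1,2}, let σ_h^s denote the N-qubit Pauli operator acting as σ_{h(q)} on each qubit q ∈ s and as identity elsewhere. Let ρ₁,…,ρ_m ∈ M_{2^N}(ℂ) be Hermitian with trace one. Define K_∞ ∈ ℝ^{m×m} by [K_∞]_{aa'} := (1/(2^S·|Q|))·Σ_{s ∈ Q} Σ_{h: s→{1,2}} (1/4)·Tr[i[O, σ_h^s]ρ_a]·Tr[i[O, σ_h^s]ρ_{a'}]. Let A_Q be the real matrix with rows indexed by pairs (s, p) with s ∈ Q and p: s → {1,2}, and with entries [A_Q]_{(s,p),a} := Tr[σ_p^s ρ_a]. Then, in the semidefinite (Loewner) order on real symmetric m×m matrices, ((Σ_{k=1}^N |o_k|)²/(2^S·|Q|))·A_QᵀA_Q ≽ K_∞ ≽ (Δ_S/(2^S·|Q|))·A_QᵀA_Q, where Δ_S := min{(gᵀo)²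 : g ∈ {0,−1,1}^N, 1 ≤ ‖g‖₁ ≤ S}. -/

import Mathlib

/-!
For a real vector `x`, put `v_s(p) = Σₐ xₐ Re Tr[σ_p^s ρₐ]`. As `Z` anticommutes with `X` and `Y`,
`i[O, σ_h^s] = Σ_{k ∈ s} 2 ε(h_k) o_k σ^s_{h + e_k}` with `ε(0) = -1, ε(1) = 1`, so the quadratic
forms of `A_QᵀA_Q` and `K_∞` at `x` are `Σ_s ‖v_s‖²` and `(2^S |Q|)⁻¹ Σ_s ‖T_s v_s‖²`, where
`(T_s v)(h) = Σ_{k ∈ s} ε(h_k) o_k v(h + e_k)` is a hopping operator on `{0,1}^s`. It is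
diagonalised by the twisted Walsh characters `h ↦ ∏_k (± i)^{h_k}`, with eigenvalues `-i gᵀo` for
sign vectors `g` supported on `s`; as `Δ_S ≤ (gᵀo)² ≤ (Σ_k |o_k|)²`, Parseval gives both bounds.
-/

open Matrix

/-- The single-qubit Pauli matrices `σ₀ = I, σ₁ = X, σ₂ = Y, σ₃ = Z`. -/
noncomputable def pauli : Fin 4 → Matrix (Fin 2) (Fin 2) ℂ :=
  ![1, !![0, 1; 1, 0], !![0, -Complex.I; Complex.I, 0], !![1, 0; 0, -1]]

/-- The `N`-qubit Pauli string `σ_i = σ_{i₁} ⊗ ⋯ ⊗ σ_{i_N}`, as a matrix on `ℂ^{2^N}`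
(whose index set is realized as `Fin N → Fin 2`). -/
noncomputable def pauliString (N : ℕ) (i : Fin N → Fin 4) :
    Matrix (Fin N → Fin 2) (Fin N → Fin 2) ℂ :=
  Matrix.of fun v w => ∏ n : Fin N, pauli (i n) (v n) (w n)

/-- The Pauli operator `σ_h^s` acting as `σ_{h(q)}` (a letter in `{1,2} = {X,Y}`)
on each qubit `q ∈ s` and as identity elsewhere. -/
noncomputable def subsetPauliXY (N : ℕ) (s : Finset (Fin N)) (h : {q // q ∈ s} → Fin 2) :
    Matrix (Fin N → Fin 2) (Fin N → Fin 2) ℂ :=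
  pauliString N (fun q => if hq : q ∈ s then ((h ⟨q, hq⟩).succ : Fin 3).castSucc else 0)

/-- The observable `O = Σ_k o_k Z_k`, where `Z_k` acts as `Z` on qubit `k` and as
identity elsewhere. -/
noncomputable def zObservable (N : ℕ) (o : Fin N → ℝ) :
    Matrix (Fin N → Fin 2) (Fin N → Fin 2) ℂ :=
  ∑ k : Fin N, (o k : ℂ) • pauliString N (fun q => if q = k then 3 else 0)

/-- `Δ_j = min{(gᵀo)² : g ∈ {0,−1,1}^N, 1 ≤ ‖g‖₁ ≤ j}`. -/
noncomputable def deltaMin (N : ℕ) (o : Fin N → ℝ) (j : ℕ) : ℝ :=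
  sInf {t : ℝ | ∃ g : Fin N → ℝ, (∀ i, g i = 0 ∨ g i = 1 ∨ g i = -1) ∧
    1 ≤ ∑ i, |g i| ∧ ∑ i, |g i| ≤ (j : ℝ) ∧ t = (∑ i, g i * o i) ^ 2}

/-- The asymptotic QNTK at `θ = 0` for gate Hamiltonians drawn uniformly from the Pauli
strings in `{X,Y}^{⊗S}` supported on a uniformly random set from `Q`:
`[K_∞]_{aa'} = (1/(2^S·|Q|))·Σ_{s∈Q} Σ_{h:s→{1,2}}
   (1/4)·Tr[i[O,σ_h^s]ρ_a]·Tr[i[O,σ_h^s]ρ_{a'}]`. -/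
noncomputable def asympQNTKxy (N S m : ℕ) (o : Fin N → ℝ) (Q : Finset (Finset (Fin N)))
    (ρ : Fin m → Matrix (Fin N → Fin 2) (Fin N → Fin 2) ℂ) : Matrix (Fin m) (Fin m) ℝ :=
  Matrix.of fun a a' => (1 / ((2 : ℝ) ^ S * Q.card)) *
    ∑ s ∈ Q, ∑ h : {q // q ∈ s} → Fin 2, (1 / 4 : ℝ) *
      (((Complex.I • (zObservable N o * subsetPauliXY N s h
            - subsetPauliXY N s h * zObservable N o)) * ρ a).trace.re *
        ((Complex.I • (zObservable N o * subsetPauliXY N s h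
            - subsetPauliXY N s h * zObservable N o)) * ρ a').trace.re)

/-- The Gram matrix `A_QᵀA_Q` of the coefficient matrix whose rows are indexed by pairs
`(s, p)` with `s ∈ Q` and `p : s → {1,2}`, with entries `[A_Q]_{(s,p),a} = Tr[σ_p^s ρ_a]`. -/
noncomputable def pauliGramXY (N m : ℕ) (Q : Finset (Finset (Fin N)))
    (ρ : Fin m → Matrix (Fin N → Fin 2) (Fin N → Fin 2) ℂ) : Matrix (Fin m) (Fin m) ℝ :=
  Matrix.of fun a a' => ∑ s ∈ Q, ∑ p : {q // q ∈ s} → Fin 2,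
    (subsetPauliXY N s p * ρ a).trace.re * (subsetPauliXY N s p * ρ a').trace.re

open ComplexConjugate

noncomputable def bitSign : Fin 2 → ℝ := ![-1, 1]

lemma abs_bitSign (x : Fin 2) : |bitSign x| = 1 := by
  fin_cases x <;> simp [bitSign]

def flipBit {ι : Type*} [DecidableEq ι] (k : ι) (h : ι → Fin 2) : ι → Fin 2 :=
  Function.update h k (h k + 1)

section BooleanCube

variable {ι : Type*} [DecidableEq ι]

lemma flipBit_apply_self (k : ι) (h : ι → Fin 2) : flipBit k h k = h k + 1 :=
  Function.update_self ..

lemma flipBit_apply_of_ne {k j : ι} (h : ι → Fin 2) (hj : j ≠ k) : flipBit k h j = h j :=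
  Function.update_of_ne hj ..

lemma flipBit_involutive (k : ι) : Function.Involutive (flipBit k) := by
  intro h
  ext1 j
  by_cases hj : j = k
  · subst hj
    rw [flipBit_apply_self, flipBit_apply_self, add_assoc]
    exact add_zero _
  · rw [flipBit_apply_of_ne _ hj, flipBit_apply_of_ne _ hj]

variable [Fintype ι]

noncomputable def signedSum (o : ι → ℝ) (g : ι → Fin 2) : ℝ :=
  ∑ k, bitSign (g k) * o k

noncomputable def walshChar (g h : ι → Fin 2) : ℂ :=
  ∏ k, ((bitSign (g k) : ℂ) * Complex.I) ^ (h k : ℕ)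

noncomputable def walshTransform (v : (ι → Fin 2) → ℂ) (g : ι → Fin 2) : ℂ :=
  ∑ h, conj (walshChar g h) * v h

lemma sum_conj_walshChar_mul_walshChar (h h' : ι → Fin 2) :
    ∑ g : ι → Fin 2, conj (walshChar g h) * walshChar g h' =
      if h = h' then 2 ^ Fintype.card ι else 0 := by
  have single : ∀ a b : Fin 2, ∑ x : Fin 2, conj (((bitSign x : ℂ) * Complex.I) ^ (a : ℕ)) *
      ((bitSign x : ℂ) * Complex.I) ^ (b : ℕ) = if a = b then 2 else 0 := by
    intro a b
    fin_cases a <;> fin_cases b <;> norm_num [bitSign, Fin.sum_univ_two]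
  simp only [walshChar, map_prod, ← Finset.prod_mul_distrib]
  rw [← Fintype.prod_sum fun k x => conj (((bitSign x : ℂ) * Complex.I) ^ (h k : ℕ)) *
    ((bitSign x : ℂ) * Complex.I) ^ (h' k : ℕ)]
  simp only [single]
  split_ifs with hh
  · simp [hh]
  · obtain ⟨k, hk⟩ := Function.ne_iff.mp hh
    exact Finset.prod_eq_zero (Finset.mem_univ k) (if_neg hk)

lemma sum_normSq_walshTransform (v : (ι → Fin 2) → ℂ) :
    ∑ g, Complex.normSq (walshTransform v g) =
      2 ^ Fintype.card ι * ∑ h, Complex.normSq (v h) := by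
  have expand : ∀ g, (Complex.normSq (walshTransform v g) : ℂ) =
      ∑ h, ∑ h', conj (v h) * v h' * (conj (walshChar g h') * walshChar g h) := by
    intro g
    rw [Complex.normSq_eq_conj_mul_self, walshTransform, map_sum, Finset.sum_mul_sum]
    refine Finset.sum_congr rfl fun h _ => Finset.sum_congr rfl fun h' _ => ?_
    simp only [map_mul, Complex.conj_conj]
    ring
  apply Complex.ofReal_injective
  push_cast
  calc ∑ g, (Complex.normSq (walshTransform v g) : ℂ)
      = ∑ h, ∑ h', conj (v h) * v h' * ∑ g, conj (walshChar g h') * walshChar g h := by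
        simp only [expand, Finset.mul_sum]
        rw [Finset.sum_comm]
        exact Finset.sum_congr rfl fun h _ => Finset.sum_comm
    _ = 2 ^ Fintype.card ι * ∑ h, (Complex.normSq (v h) : ℂ) := by
        simp only [sum_conj_walshChar_mul_walshChar, mul_ite, mul_zero, Finset.sum_ite_eq',
          Finset.mem_univ, if_true, Finset.mul_sum, Complex.normSq_eq_conj_mul_self]
        exact Finset.sum_congr rfl fun h _ => mul_comm _ _

lemma bitSign_flipBit_mul_conj_walshChar (g h : ι → Fin 2) (k : ι) :
    (bitSign (flipBit k h k) : ℂ) * conj (walshChar g (flipBit k h)) =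
      -(bitSign (g k) : ℂ) * Complex.I * conj (walshChar g h) := by
  have split : ∀ h' : ι → Fin 2, walshChar g h' =
      ((bitSign (g k) : ℂ) * Complex.I) ^ (h' k : ℕ) *
        ∏ j ∈ Finset.univ.erase k, ((bitSign (g j) : ℂ) * Complex.I) ^ (h' j : ℕ) :=
    fun h' => (Finset.mul_prod_erase _ _ (Finset.mem_univ k)).symm
  have rest :
      ∏ j ∈ Finset.univ.erase k, ((bitSign (g j) : ℂ) * Complex.I) ^ (flipBit k h j : ℕ) =
        ∏ j ∈ Finset.univ.erase k, ((bitSign (g j) : ℂ) * Complex.I) ^ (h j : ℕ) :=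
    Finset.prod_congr rfl fun j hj => by rw [flipBit_apply_of_ne h (Finset.ne_of_mem_erase hj)]
  have site : ∀ x b : Fin 2,
      (bitSign (b + 1) : ℂ) * conj (((bitSign x : ℂ) * Complex.I) ^ ((b + 1 : Fin 2) : ℕ)) =
        -(bitSign x : ℂ) * Complex.I * conj (((bitSign x : ℂ) * Complex.I) ^ (b : ℕ)) := by
    intro x b
    fin_cases x <;> fin_cases b <;> simp [bitSign]
  rw [split, split h, rest, flipBit_apply_self, map_mul, map_mul, ← mul_assoc, site, mul_assoc]

noncomputable def hopOp (o : ι → ℝ) (v : (ι → Fin 2) → ℝ) (h : ι → Fin 2) : ℝ :=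
  ∑ k, bitSign (h k) * o k * v (flipBit k h)

lemma sum_mul_hopOp {n : Type*} [Fintype n] (o : ι → ℝ) (v : n → (ι → Fin 2) → ℝ)
    (x : n → ℝ) (h : ι → Fin 2) :
    ∑ a, x a * hopOp o (v a) h = hopOp o (fun p => ∑ a, x a * v a p) h := by
  simp only [hopOp, Finset.mul_sum]
  rw [Finset.sum_comm]
  exact Finset.sum_congr rfl fun k _ => Finset.sum_congr rfl fun a _ => by ring

lemma walshTransform_hopOp (o : ι → ℝ) (v : (ι → Fin 2) → ℝ) (g : ι → Fin 2) :
    walshTransform (fun h => (hopOp o v h : ℂ)) g =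
      -Complex.I * signedSum o g * walshTransform (fun h => (v h : ℂ)) g := by
  have flip_sum : ∀ k, ∑ h, (bitSign (h k) : ℂ) * conj (walshChar g h) * v (flipBit k h) =
      -(bitSign (g k) : ℂ) * Complex.I * walshTransform (fun h => (v h : ℂ)) g := by
    intro k
    rw [← (flipBit_involutive k).bijective.sum_comp, walshTransform, Finset.mul_sum]
    refine Finset.sum_congr rfl fun h _ => ?_
    rw [flipBit_involutive k h, bitSign_flipBit_mul_conj_walshChar, mul_assoc]
  calc walshTransform (fun h => (hopOp o v h : ℂ)) g
      = ∑ k, (o k : ℂ) *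
          ∑ h, (bitSign (h k) : ℂ) * conj (walshChar g h) * v (flipBit k h) := by
        simp only [walshTransform, hopOp, Complex.ofReal_sum, Complex.ofReal_mul, Finset.mul_sum]
        rw [Finset.sum_comm]
        exact Finset.sum_congr rfl fun k _ => Finset.sum_congr rfl fun h _ => by ring
    _ = -Complex.I * signedSum o g * walshTransform (fun h => (v h : ℂ)) g := by
        simp only [flip_sum, signedSum, Complex.ofReal_sum, Complex.ofReal_mul, Finset.mul_sum,
          Finset.sum_mul]
        exact Finset.sum_congr rfl fun k _ => by ring

lemma two_pow_mul_sum_sq (v : (ι → Fin 2) → ℝ) :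
    2 ^ Fintype.card ι * ∑ h, v h ^ 2 =
      ∑ g, Complex.normSq (walshTransform (fun h => (v h : ℂ)) g) := by
  simp only [sum_normSq_walshTransform, Complex.normSq_ofReal, sq]

lemma two_pow_mul_sum_sq_hopOp (o : ι → ℝ) (v : (ι → Fin 2) → ℝ) :
    2 ^ Fintype.card ι * ∑ h, hopOp o v h ^ 2 =
      ∑ g, signedSum o g ^ 2 * Complex.normSq (walshTransform (fun h => (v h : ℂ)) g) := by
  rw [two_pow_mul_sum_sq]
  simp only [walshTransform_hopOp, Complex.normSq_mul, Complex.normSq_neg, Complex.normSq_I,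
    Complex.normSq_ofReal, one_mul, sq]

lemma le_sum_sq_hopOp (o : ι → ℝ) (v : (ι → Fin 2) → ℝ) {Δ : ℝ}
    (hΔ : ∀ g, Δ ≤ signedSum o g ^ 2) :
    Δ * ∑ h, v h ^ 2 ≤ ∑ h, hopOp o v h ^ 2 := by
  refine le_of_mul_le_mul_left ?_ (by positivity : (0 : ℝ) < 2 ^ Fintype.card ι)
  rw [mul_left_comm, two_pow_mul_sum_sq, two_pow_mul_sum_sq_hopOp, Finset.mul_sum]
  exact Finset.sum_le_sum fun g _ =>
    mul_le_mul_of_nonneg_right (hΔ g) (Complex.normSq_nonneg _)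

lemma sum_sq_hopOp_le (o : ι → ℝ) (v : (ι → Fin 2) → ℝ) {B : ℝ}
    (hB : ∀ g, signedSum o g ^ 2 ≤ B) :
    ∑ h, hopOp o v h ^ 2 ≤ B * ∑ h, v h ^ 2 := by
  refine le_of_mul_le_mul_left ?_ (by positivity : (0 : ℝ) < 2 ^ Fintype.card ι)
  rw [mul_left_comm, two_pow_mul_sum_sq_hopOp, two_pow_mul_sum_sq, Finset.mul_sum]
  exact Finset.sum_le_sum fun g _ =>
    mul_le_mul_of_nonneg_right (hB g) (Complex.normSq_nonneg _)

end BooleanCube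

lemma posSemidef_sub_of_forall_dotProduct_mulVec_le {n : Type*} [Fintype n]
    {A B : Matrix n n ℝ} (hA : A.IsHermitian) (hB : B.IsHermitian)
    (h : ∀ x, star x ⬝ᵥ (B *ᵥ x) ≤ star x ⬝ᵥ (A *ᵥ x)) : (A - B).PosSemidef :=
  .of_dotProduct_mulVec_nonneg (hA.sub hB) fun x => by
    rw [sub_mulVec, dotProduct_sub, sub_nonneg]
    exact h x

section Gram

variable {n α : Type*} {J : α → Type*} [∀ s, Fintype (J s)]

def sumGram (Q : Finset α) (V : n → (s : α) → J s → ℝ) : Matrix n n ℝ :=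
  of fun a b => ∑ s ∈ Q, ∑ p, V a s p * V b s p

lemma sumGram_isHermitian (Q : Finset α) (V : n → (s : α) → J s → ℝ) :
    (sumGram Q V).IsHermitian := by
  ext a b
  simp only [conjTranspose_apply, sumGram, of_apply, star_trivial, mul_comm]

variable [Fintype n]

lemma dotProduct_sumGram_mulVec (Q : Finset α) (V : n → (s : α) → J s → ℝ)
    (x : n → ℝ) :
    star x ⬝ᵥ (sumGram Q V *ᵥ x) = ∑ s ∈ Q, ∑ p, (∑ a, x a * V a s p) ^ 2 := by
  simp only [dotProduct, mulVec, sumGram, of_apply, star_trivial, Finset.mul_sum, Finset.sum_mul]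
  calc ∑ a, ∑ b, ∑ s ∈ Q, ∑ p, x a * (V a s p * V b s p * x b)
      = ∑ a, ∑ s ∈ Q, ∑ p, ∑ b, x a * (V a s p * V b s p * x b) :=
        Finset.sum_congr rfl fun a _ => Finset.sum_comm.trans
          (Finset.sum_congr rfl fun s _ => Finset.sum_comm)
    _ = ∑ s ∈ Q, ∑ p, ∑ a, ∑ b, x a * V a s p * (x b * V b s p) := by
        rw [Finset.sum_comm]
        refine Finset.sum_congr rfl fun s _ => Finset.sum_comm.trans ?_
        exact Finset.sum_congr rfl fun p _ => Finset.sum_congr rfl fun a _ =>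
          Finset.sum_congr rfl fun b _ => by ring
    _ = ∑ s ∈ Q, ∑ p, (∑ a, x a * V a s p) ^ 2 := by simp only [sq, Finset.sum_mul_sum]

end Gram

section HopGram

variable {n α : Type*} [Fintype n] {ι : α → Type*} [∀ s, Fintype (ι s)]
  [∀ s, DecidableEq (ι s)]
  (Q : Finset α) (o : (s : α) → ι s → ℝ) (V : n → (s : α) → (ι s → Fin 2) → ℝ)

lemma posSemidef_smul_sumGram_sub_sumGram_hopOp {B : ℝ}
    (hB : ∀ s ∈ Q, ∀ g, signedSum (o s) g ^ 2 ≤ B) :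
    (B • sumGram Q V - sumGram Q fun a s => hopOp (o s) (V a s)).PosSemidef := by
  refine posSemidef_sub_of_forall_dotProduct_mulVec_le
    ((sumGram_isHermitian Q V).smul (.all B)) (sumGram_isHermitian _ _) fun x => ?_
  rw [smul_mulVec, dotProduct_smul, smul_eq_mul, dotProduct_sumGram_mulVec,
    dotProduct_sumGram_mulVec, Finset.mul_sum]
  simp only [sum_mul_hopOp]
  exact Finset.sum_le_sum fun s hs => sum_sq_hopOp_le _ _ (hB s hs)

lemma posSemidef_sumGram_hopOp_sub_smul_sumGram {Δ : ℝ}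
    (hΔ : ∀ s ∈ Q, ∀ g, Δ ≤ signedSum (o s) g ^ 2) :
    ((sumGram Q fun a s => hopOp (o s) (V a s)) - Δ • sumGram Q V).PosSemidef := by
  refine posSemidef_sub_of_forall_dotProduct_mulVec_le (sumGram_isHermitian _ _)
    ((sumGram_isHermitian Q V).smul (.all Δ)) fun x => ?_
  rw [smul_mulVec, dotProduct_smul, smul_eq_mul, dotProduct_sumGram_mulVec,
    dotProduct_sumGram_mulVec, Finset.mul_sum]
  simp only [sum_mul_hopOp]
  exact Finset.sum_le_sum fun s hs => le_sum_sq_hopOp _ _ (hΔ s hs)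

end HopGram

section PiTensor

variable {ι κ R : Type*} [Fintype ι] [DecidableEq ι] [CommRing R]

def piTensor (A : ι → Matrix κ κ R) : Matrix (ι → κ) (ι → κ) R :=
  Matrix.of fun v w => ∏ n, A n (v n) (w n)

lemma piTensor_mul [Fintype κ] (A B : ι → Matrix κ κ R) :
    piTensor A * piTensor B = piTensor (A * B) := by
  ext v w
  simp only [piTensor, mul_apply, of_apply, Pi.mul_apply]
  rw [Fintype.prod_sum fun n x => A n (v n) x * B n x (w n)]
  exact Finset.sum_congr rfl fun u _ => Finset.prod_mul_distrib.symm

lemma piTensor_update_apply (A : ι → Matrix κ κ R) (k : ι) (M : Matrix κ κ R) (v w : ι → κ) :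
    piTensor (Function.update A k M) v w =
      M (v k) (w k) * ∏ n ∈ Finset.univ.erase k, A n (v n) (w n) := by
  rw [piTensor, of_apply, ← Finset.mul_prod_erase _ _ (Finset.mem_univ k), Function.update_self]
  congr 1
  exact Finset.prod_congr rfl fun n hn => by rw [Function.update_of_ne (Finset.ne_of_mem_erase hn)]

lemma piTensor_update_smul (A : ι → Matrix κ κ R) (k : ι) (c : R) (M : Matrix κ κ R) :
    piTensor (Function.update A k (c • M)) = c • piTensor (Function.update A k M) := by
  ext v w
  rw [Matrix.smul_apply, piTensor_update_apply, piTensor_update_apply, Matrix.smul_apply,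
    smul_eq_mul, smul_eq_mul, mul_assoc]

lemma piTensor_update_zero (A : ι → Matrix κ κ R) (k : ι) :
    piTensor (Function.update A k 0) = 0 := by
  ext v w
  rw [piTensor_update_apply, Matrix.zero_apply, Matrix.zero_apply, zero_mul]

lemma piTensor_commutator_of_forall_ne_eq_one [Fintype κ] [DecidableEq κ]
    {A B : ι → Matrix κ κ R} {k : ι} (hA : ∀ n ≠ k, A n = 1) :
    piTensor A * piTensor B - piTensor B * piTensor A =
      piTensor (Function.update B k (A k * B k - B k * A k)) := by
  have hAB : A * B = Function.update B k (A k * B k) := by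
    ext1 n
    by_cases hn : n = k
    · subst hn; simp
    · simp [Function.update_of_ne hn, hA n hn]
  have hBA : B * A = Function.update B k (B k * A k) := by
    ext1 n
    by_cases hn : n = k
    · subst hn; simp
    · simp [Function.update_of_ne hn, hA n hn]
  rw [piTensor_mul, piTensor_mul, hAB, hBA]
  ext v w
  simp only [Matrix.sub_apply, piTensor_update_apply, sub_mul]

end PiTensor

noncomputable def zString (N : ℕ) (k : Fin N) : Matrix (Fin N → Fin 2) (Fin N → Fin 2) ℂ :=
  pauliString N fun q => if q = k then 3 else 0

lemma zObservable_eq_sum_zString (N : ℕ) (o : Fin N → ℝ) :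
    zObservable N o = ∑ k, (o k : ℂ) • zString N k :=
  rfl

lemma pauliString_eq_piTensor (N : ℕ) (i : Fin N → Fin 4) :
    pauliString N i = piTensor fun n => pauli (i n) := rfl

-- `pauliXY 0 = X` and `pauliXY 1 = Y`, the letters used by `subsetPauliXY`.
noncomputable def pauliXY (x : Fin 2) : Matrix (Fin 2) (Fin 2) ℂ :=
  pauli (x.succ : Fin 3).castSucc

noncomputable def xyFactors {N : ℕ} (s : Finset (Fin N)) (h : s → Fin 2) :
    Fin N → Matrix (Fin 2) (Fin 2) ℂ :=
  fun q => if hq : q ∈ s then pauliXY (h ⟨q, hq⟩) else 1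

lemma subsetPauliXY_eq_piTensor (N : ℕ) (s : Finset (Fin N)) (h : s → Fin 2) :
    subsetPauliXY N s h = piTensor (xyFactors s h) := by
  rw [subsetPauliXY, pauliString_eq_piTensor]
  congr 1
  ext1 q
  unfold xyFactors
  split_ifs <;> rfl

lemma xyFactors_flipBit {N : ℕ} (s : Finset (Fin N)) (h : s → Fin 2) (k : s) :
    xyFactors s (flipBit k h) = Function.update (xyFactors s h) k (pauliXY (h k + 1)) := by
  ext1 q
  by_cases hq : q = k
  · subst hq
    simp [xyFactors, flipBit_apply_self]
  · rw [Function.update_of_ne hq]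
    unfold xyFactors
    split_ifs with hqs
    · rw [flipBit_apply_of_ne h fun e => hq (congrArg Subtype.val e)]
    · rfl

lemma smul_commutator_pauli_three_pauliXY (x : Fin 2) :
    Complex.I • (pauli 3 * pauliXY x - pauliXY x * pauli 3) =
      ((2 * bitSign x : ℝ) : ℂ) • pauliXY (x + 1) := by
  fin_cases x <;> ext a b <;> fin_cases a <;> fin_cases b <;>
    simp [pauli, pauliXY, bitSign] <;> ring_nf <;> simp

lemma smul_commutator_zString_subsetPauliXY {N : ℕ} (s : Finset (Fin N)) (h : s → Fin 2)
    (k : Fin N) :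
    Complex.I • (zString N k * subsetPauliXY N s h - subsetPauliXY N s h * zString N k) =
      piTensor (Function.update (xyFactors s h) k
        (Complex.I • (pauli 3 * xyFactors s h k - xyFactors s h k * pauli 3))) := by
  have hZ : ∀ n ≠ k, pauli (if n = k then 3 else 0) = 1 := fun n hn => by rw [if_neg hn]; rfl
  rw [subsetPauliXY_eq_piTensor, zString, pauliString_eq_piTensor,
    piTensor_commutator_of_forall_ne_eq_one hZ, if_pos rfl, piTensor_update_smul]

lemma smul_commutator_zObservable_subsetPauliXY (N : ℕ) (o : Fin N → ℝ) (s : Finset (Fin N))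
    (h : s → Fin 2) :
    Complex.I • (zObservable N o * subsetPauliXY N s h - subsetPauliXY N s h * zObservable N o) =
      ∑ k : s, ((2 * bitSign (h k) * o k : ℝ) : ℂ) • subsetPauliXY N s (flipBit k h) := by
  set Z := zString N
  set σ := subsetPauliXY N s h
  have outside : ∀ k ∉ s, Complex.I • (Z k * σ - σ * Z k) = 0 := by
    intro k hk
    have : xyFactors s h k = 1 := dif_neg hk
    rw [smul_commutator_zString_subsetPauliXY, this, mul_one, one_mul, sub_self, smul_zero,
      piTensor_update_zero]
  have inside : ∀ k : s, Complex.I • (Z k * σ - σ * Z k) =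
      ((2 * bitSign (h k) : ℝ) : ℂ) • subsetPauliXY N s (flipBit k h) := by
    intro k
    have : xyFactors s h k = pauliXY (h k) := dif_pos k.2
    rw [smul_commutator_zString_subsetPauliXY, this, smul_commutator_pauli_three_pauliXY,
      piTensor_update_smul, ← xyFactors_flipBit, ← subsetPauliXY_eq_piTensor]
  calc Complex.I • (zObservable N o * σ - σ * zObservable N o)
      = ∑ k, (o k : ℂ) • (Complex.I • (Z k * σ - σ * Z k)) := by
        simp only [zObservable_eq_sum_zString, Finset.sum_mul, Finset.mul_sum,
          ← Finset.sum_sub_distrib, Finset.smul_sum, smul_mul_assoc, mul_smul_comm, ← smul_sub]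
        exact Finset.sum_congr rfl fun k _ => smul_comm _ _ _
    _ = ∑ k ∈ s, (o k : ℂ) • (Complex.I • (Z k * σ - σ * Z k)) :=
        (Finset.sum_subset s.subset_univ fun k _ hk => by rw [outside k hk, smul_zero]).symm
    _ = ∑ k : s, ((2 * bitSign (h k) * o k : ℝ) : ℂ) • subsetPauliXY N s (flipBit k h) := by
        rw [← Finset.sum_coe_sort s]
        refine Finset.sum_congr rfl fun k _ => ?_
        rw [inside k, smul_smul]
        push_cast
        ring_nf

lemma half_mul_trace_re_smul_commutator (N : ℕ) (o : Fin N → ℝ) (s : Finset (Fin N))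
    (h : s → Fin 2) (ρ : Matrix (Fin N → Fin 2) (Fin N → Fin 2) ℂ) :
    1 / 2 * ((Complex.I • (zObservable N o * subsetPauliXY N s h -
        subsetPauliXY N s h * zObservable N o)) * ρ).trace.re =
      hopOp (fun k : s => o k) (fun p => (subsetPauliXY N s p * ρ).trace.re) h := by
  rw [smul_commutator_zObservable_subsetPauliXY, Finset.sum_mul, trace_sum, Complex.re_sum,
    Finset.mul_sum]
  refine Finset.sum_congr rfl fun k _ => ?_
  rw [smul_mul_assoc, trace_smul, smul_eq_mul, Complex.re_ofReal_mul]
  ring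

lemma asympQNTKxy_eq_smul_sumGram (N S m : ℕ) (o : Fin N → ℝ) (Q : Finset (Finset (Fin N)))
    (ρ : Fin m → Matrix (Fin N → Fin 2) (Fin N → Fin 2) ℂ) :
    asympQNTKxy N S m o Q ρ = (1 / ((2 : ℝ) ^ S * Q.card)) • sumGram Q fun a s =>
      hopOp (fun k : s => o k) (fun p => (subsetPauliXY N s p * ρ a).trace.re) := by
  ext a b
  simp only [asympQNTKxy, sumGram, of_apply, Matrix.smul_apply, smul_eq_mul,
    ← half_mul_trace_re_smul_commutator]
  congr 1
  exact Finset.sum_congr rfl fun s _ => Finset.sum_congr rfl fun h _ => by ring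

lemma pauliGramXY_eq_sumGram (N m : ℕ) (Q : Finset (Finset (Fin N)))
    (ρ : Fin m → Matrix (Fin N → Fin 2) (Fin N → Fin 2) ℂ) :
    pauliGramXY N m Q ρ = sumGram Q fun a s p => (subsetPauliXY N s p * ρ a).trace.re :=
  rfl

lemma sq_signedSum_le_sq_sum_abs {ι : Type*} [Fintype ι] (o : ι → ℝ) (s : Finset ι)
    (g : s → Fin 2) :
    signedSum (fun k : s => o k) g ^ 2 ≤ (∑ k, |o k|) ^ 2 := by
  have h : |signedSum (fun k : s => o k) g| ≤ ∑ k, |o k| :=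
    calc |signedSum (fun k : s => o k) g|
        ≤ ∑ k : s, |bitSign (g k) * o k| := Finset.abs_sum_le_sum_abs _ _
      _ = ∑ k ∈ s, |o k| := by
          simp only [abs_mul, abs_bitSign, one_mul]
          exact Finset.sum_coe_sort s fun k => |o k|
      _ ≤ ∑ k, |o k| :=
          Finset.sum_le_sum_of_subset_of_nonneg s.subset_univ fun _ _ _ => abs_nonneg _
  simpa only [sq_abs] using pow_le_pow_left₀ (abs_nonneg _) h 2

lemma deltaMin_card_le_sq_signedSum {N : ℕ} (o : Fin N → ℝ) {s : Finset (Fin N)}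
    (hs : s.Nonempty) (g : s → Fin 2) :
    deltaMin N o s.card ≤ signedSum (fun k : s => o k) g ^ 2 := by
  set e : Fin N → ℝ := fun i => if hi : i ∈ s then bitSign (g ⟨i, hi⟩) else 0
  have e_mem : ∀ i, e i = 0 ∨ e i = 1 ∨ e i = -1 := by
    intro i
    by_cases hi : i ∈ s
    · simp only [e, dif_pos hi]
      exact Or.inr ((abs_eq zero_le_one).mp (abs_bitSign _))
    · simp only [e, dif_neg hi, true_or]
  have norm_one_eq : ∑ i, |e i| = s.card := by
    simp only [e, apply_dite abs, abs_bitSign, abs_zero]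
    rw [← Finset.sum_attach_eq_sum_dite s fun _ => 1]
    simp
  have dot_eq : ∑ i, e i * o i = signedSum (fun k : s => o k) g := by
    simp only [e, dite_mul, zero_mul]
    exact (Finset.sum_attach_eq_sum_dite s fun k => bitSign (g k) * o k).symm
  refine csInf_le ⟨0, ?_⟩ ⟨e, e_mem, ?_, norm_one_eq.le, by rw [dot_eq]⟩
  · rintro t ⟨g, -, -, -, rfl⟩
    positivity
  · rw [norm_one_eq]
    exact_mod_cast hs.card_pos

theorem asympQNTKxy_loewner_bounds_general (N S m : ℕ) (hS : 1 ≤ S)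
    (o : Fin N → ℝ) (Q : Finset (Finset (Fin N)))
    (hQcard : ∀ s ∈ Q, s.card = S)
    (ρ : Fin m → Matrix (Fin N → Fin 2) (Fin N → Fin 2) ℂ) :
    ((((∑ k, |o k|) ^ 2 / ((2 : ℝ) ^ S * Q.card)) • pauliGramXY N m Q ρ
        - asympQNTKxy N S m o Q ρ).PosSemidef)
    ∧ ((asympQNTKxy N S m o Q ρ
        - (deltaMin N o S / ((2 : ℝ) ^ S * Q.card)) • pauliGramXY N m Q ρ).PosSemidef) := by
  have hΔ : ∀ s ∈ Q, ∀ g, deltaMin N o S ≤ signedSum (fun k : s => o k) g ^ 2 :=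
    fun s hs g => hQcard s hs ▸
      deltaMin_card_le_sq_signedSum o (Finset.card_pos.mp (hQcard s hs ▸ hS)) g
  rw [asympQNTKxy_eq_smul_sumGram, pauliGramXY_eq_sumGram]
  set c : ℝ := 1 / ((2 : ℝ) ^ S * Q.card)
  have hc : 0 ≤ c := by positivity
  have div_eq : ∀ t : ℝ, t / ((2 : ℝ) ^ S * Q.card) = c * t := fun t => by ring
  rw [div_eq, div_eq, mul_smul, mul_smul, ← smul_sub, ← smul_sub]
  exact ⟨(posSemidef_smul_sumGram_sub_sumGram_hopOp Q _ _
      fun s _ => sq_signedSum_le_sq_sum_abs o s).smul hc,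
    (posSemidef_sumGram_hopOp_sub_smul_sumGram Q _ _ hΔ).smul hc⟩

/-- **Loewner bounds for the asymptotic QNTK with `{X,Y}^{⊗S}` gate Hamiltonians.**
For trace-one Hermitian states `ρ₁, …, ρ_m`,
`((Σ_k|o_k|)²/(2^S|Q|))·A_QᵀA_Q ≽ K_∞ ≽ (Δ_S/(2^S|Q|))·A_QᵀA_Q`. -/
theorem asympQNTKxy_loewner_bounds (N S m : ℕ) (hS : 1 ≤ S) (hSN : S ≤ N)
    (o : Fin N → ℝ) (Q : Finset (Finset (Fin N))) (hQ : Q.Nonempty)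
    (hQcard : ∀ s ∈ Q, s.card = S)
    (ρ : Fin m → Matrix (Fin N → Fin 2) (Fin N → Fin 2) ℂ)
    (hherm : ∀ a, (ρ a).IsHermitian) (htr : ∀ a, (ρ a).trace = 1) :
    ((((∑ k, |o k|) ^ 2 / ((2 : ℝ) ^ S * Q.card)) • pauliGramXY N m Q ρ
        - asympQNTKxy N S m o Q ρ).PosSemidef)
    ∧ ((asympQNTKxy N S m o Q ρ
        - (deltaMin N o S / ((2 : ℝ) ^ S * Q.card)) • pauliGramXY N m Q ρ).PosSemidef) :=
  asympQNTKxy_loewner_bounds_general N S m hS o Q hQcard ρ
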